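/- For integers n ≥ 1 and p ≥ 1, the p-variation norm of t ↦ sin(nπt) on [0,1] is at most C (1/2^p + n)^{1/p} for some constant C independent of n; in particular ‖sin(nπ·)‖_{p-var} ≤ C (1+n)^{1/p}. -/

import Mathlib

open Real

/-- The set of `p`-variation partition sums of a function `f` on `[0,1]`. -/
def pVarSums (p : ℝ) (f : ℝ → ℝ) : Set ℝ :=
  {x : ℝ | ∃ (N : ℕ) (t : Fin (N + 1) → ℝ), StrictMono t ∧ t 0 = 0 ∧ t (Fin.last N) = 1 ∧
    x = (∑ i : Fin N, |f (t i.succ) - f (t i.castSucc)| ^ p) ^ (1 / p)}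

/-!
For `p ≥ 1` an increment `a` with `0 ≤ a ≤ D` satisfies `a ^ p ≤ D ^ (p - 1) * a`. A function
with oscillation at most `D` and Lipschitz constant `L` therefore has `p`-variation sums at most
`(D ^ (p - 1) * L) ^ (1 / p)`, because the increments of a partition of `[0,1]` add up to `1`.
For `sin (n π ·)` we have `D = 2` and `L = n π`, so `C = (2 ^ (p - 1) π) ^ (1 / p)` works.
-/

theorem Fin.sum_succ_sub_castSucc {G : Type*} [AddCommGroup G] {N : ℕ} (t : Fin (N + 1) → G) :
    ∑ i : Fin N, (t i.succ - t i.castSucc) = t (Fin.last N) - t 0 := by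
  induction N with
  | zero => simp
  | succ N ih =>
    rw [Fin.sum_univ_castSucc]
    simp only [Fin.succ_castSucc]
    rw [ih (fun i => t i.castSucc), Fin.succ_last]
    simp

theorem Real.rpow_le_rpow_sub_one_mul {a D p : ℝ} (ha : 0 ≤ a) (haD : a ≤ D) (hp : 1 ≤ p) :
    a ^ p ≤ D ^ (p - 1) * a := by
  calc a ^ p = a ^ (p - 1) * a ^ (1 : ℝ) := by
        rw [← Real.rpow_add' ha (by linarith), sub_add_cancel]
    _ ≤ D ^ (p - 1) * a := by
        rw [Real.rpow_one]
        gcongr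

theorem sSup_pVarSums_le {p D L : ℝ} {f : ℝ → ℝ} (hp : 1 ≤ p)
    (hosc : ∀ x y, |f x - f y| ≤ D) (hlip : ∀ x y, |f x - f y| ≤ L * |x - y|) :
    sSup (pVarSums p f) ≤ (D ^ (p - 1) * L) ^ (1 / p) := by
  have hD : 0 ≤ D := (abs_nonneg _).trans (hosc 0 0)
  have hL : 0 ≤ L := by simpa using (abs_nonneg _).trans (hlip 1 0)
  refine Real.sSup_le ?_ (by positivity)
  rintro _ ⟨N, t, ht, h0, h1, rfl⟩
  refine Real.rpow_le_rpow (Finset.sum_nonneg fun i _ => by positivity) ?_ (by positivity)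
  calc ∑ i : Fin N, |f (t i.succ) - f (t i.castSucc)| ^ p
      ≤ ∑ i : Fin N, D ^ (p - 1) * (L * (t i.succ - t i.castSucc)) := by
        refine Finset.sum_le_sum fun i _ => ?_
        have hstep : 0 ≤ t i.succ - t i.castSucc :=
          sub_nonneg.2 (ht Fin.castSucc_lt_succ).le
        calc |f (t i.succ) - f (t i.castSucc)| ^ p
            ≤ D ^ (p - 1) * |f (t i.succ) - f (t i.castSucc)| :=
              Real.rpow_le_rpow_sub_one_mul (abs_nonneg _) (hosc _ _) hp
          _ ≤ D ^ (p - 1) * (L * (t i.succ - t i.castSucc)) := by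
              gcongr
              simpa [abs_of_nonneg hstep] using hlip (t i.succ) (t i.castSucc)
    _ = D ^ (p - 1) * L * ∑ i : Fin N, (t i.succ - t i.castSucc) := by
        simp only [Finset.mul_sum, mul_assoc]
    _ = D ^ (p - 1) * L := by
        rw [Fin.sum_succ_sub_castSucc, h1, h0, sub_zero, mul_one]

theorem abs_sin_mul_sub_sin_mul_le (c x y : ℝ) (hc : 0 ≤ c) :
    |sin (c * x) - sin (c * y)| ≤ c * |x - y| := by
  calc |sin (c * x) - sin (c * y)| ≤ |c * x - c * y| := abs_sin_sub_sin_le _ _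
    _ = c * |x - y| := by rw [← mul_sub, abs_mul, abs_of_nonneg hc]

theorem abs_sin_sub_sin_le_two (x y : ℝ) : |sin x - sin y| ≤ 2 := by
  calc |sin x - sin y| ≤ |sin x| + |sin y| := abs_sub _ _
    _ ≤ 1 + 1 := add_le_add (abs_sin_le_one x) (abs_sin_le_one y)
    _ = 2 := one_add_one_eq_two

/-- For integers `n ≥ 1` and `p ≥ 1`, the `p`-variation norm of `t ↦ sin (n π t)` on `[0,1]`
is at most `C (1/2^p + n)^{1/p}` for a constant `C` independent of `n`; in particular it is
at most `C (1+n)^{1/p}`. -/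
theorem stmt_1 (p : ℕ) (hp : 1 ≤ p) :
    ∃ C > (0 : ℝ), ∀ n : ℕ, 1 ≤ n →
      sSup (pVarSums (p : ℝ) (fun t => Real.sin (n * Real.pi * t))) ≤
          C * ((1 / 2 ^ p : ℝ) + n) ^ ((1 : ℝ) / p) ∧
      sSup (pVarSums (p : ℝ) (fun t => Real.sin (n * Real.pi * t))) ≤
          C * ((1 : ℝ) + n) ^ ((1 : ℝ) / p) := by
  have hp' : (1 : ℝ) ≤ p := by exact_mod_cast hp
  refine ⟨(2 ^ ((p : ℝ) - 1) * π) ^ ((1 : ℝ) / p), by positivity, fun n _ => ?_⟩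
  have hvar : sSup (pVarSums (p : ℝ) (fun t => sin (n * π * t))) ≤
      (2 ^ ((p : ℝ) - 1) * π) ^ ((1 : ℝ) / p) * (n : ℝ) ^ ((1 : ℝ) / p) := by
    rw [← Real.mul_rpow (by positivity) (by positivity), mul_assoc, mul_comm π]
    exact sSup_pVarSums_le hp' (fun x y => abs_sin_sub_sin_le_two _ _)
      (fun x y => abs_sin_mul_sub_sin_mul_le _ x y (by positivity))
  constructor <;> refine hvar.trans (by gcongr; linarith [show (0 : ℝ) ≤ 1 / 2 ^ p by positivity])
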